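/- For every natural number k and every number of iterations T with k < T, there exist a finite simple graph G and two subgraphs S_1, S_2 of G (given by vertex subsets V_1, V_2) such that the multiset of WL colors returned by WLS^{k+1} after T iterations on S_1 differs from that on S_2, while the multiset of WL colors returned by WLS^{k} after T iterations on S_1 equals that on S_2. In other words, non-equivalence of WLS^{k+1} colorings of two subgraphs does not imply non-equivalence of their WLS^{k} colorings. -/

import Mathlib

/-- Hereditarily built nested WL colors: a color after `i` refinement iterations is a
pair of a color after `i - 1` iterations and a multiset of such colors (of the
neighbors); the initial uniform color is the unique element of `Unit`. Equality of
colors is canonical. -/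
def WLColor : ℕ → Type
  | 0 => Unit
  | (i + 1) => WLColor i × Multiset (WLColor i)

/-- 1-WL color refinement with uniform initial coloring: `wlColor G i v` is the color
of vertex `v` after `i` refinement iterations on the finite simple graph `G`; it pairs
the previous color of `v` with the multiset of previous colors of its neighbors. -/
noncomputable def wlColor {W : Type*} [Fintype W] (G : SimpleGraph W) :
    (i : ℕ) → W → WLColor i
  | 0, _ => ()
  | (i + 1), v =>
      (wlColor G i v, ((G.neighborSet v).toFinite.toFinset.val).map (wlColor G i))

/-- The `k`-hop neighborhood of a vertex set `Vs`: all vertices of `G` reachable from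
some vertex of `Vs` within `k` hops. -/
def khop {V : Type*} (G : SimpleGraph V) (Vs : Set V) (k : ℕ) : Set V :=
  {u | ∃ v ∈ Vs, ∃ p : G.Walk v u, p.length ≤ k}

lemma subset_khop {V : Type*} (G : SimpleGraph V) (Vs : Set V) (k : ℕ) :
    Vs ⊆ khop G Vs k :=
  fun v hv => ⟨v, hv, SimpleGraph.Walk.nil, by simp⟩

/-- `WLS G k T Vs`: run `T` iterations of 1-WL on the subgraph of `G` induced by the
`k`-hop neighborhood of the subgraph with vertex set `Vs`, and return the multiset of
final colors of the vertices of `Vs`. -/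
noncomputable def WLS {V : Type*} [Fintype V] (G : SimpleGraph V) (k T : ℕ)
    (Vs : Finset V) : Multiset (WLColor T) :=
  letI : Fintype ↥(khop G (↑Vs) k) := Fintype.ofFinite _
  Vs.attach.val.map fun v =>
    wlColor (G.induce (khop G (↑Vs) k)) T
      ⟨v.1, subset_khop G (↑Vs) k (Finset.mem_coe.mpr v.2)⟩

/-- The regularity invariant: every vertex "visible" in the color has `d` neighbors. -/
def WLReg (d : ℕ) : (i : ℕ) → WLColor i → Prop
  | 0, _ => True
  | (i + 1), c => Multiset.card c.2 = d ∧ ∀ x ∈ c.2, WLReg d i x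

/-- In a `d`-regular graph, every color satisfies the regularity invariant. -/
lemma wlReg_of_regular {W : Type*} [Fintype W] {G : SimpleGraph W} {d : ℕ}
    (h : ∀ v, Multiset.card ((G.neighborSet v).toFinite.toFinset.val) = d) :
    ∀ (i : ℕ) (v : W), WLReg d i (wlColor G i v) := by
  intro i
  induction i with
  | zero => intro v; trivial
  | succ i ih =>
    intro v
    refine ⟨by simp [wlColor]; simpa using h v, ?_⟩
    intro x hx
    simp only [wlColor, Multiset.mem_map] at hx
    obtain ⟨u, _, rfl⟩ := hx
    exact ih u

/-- If some vertex within distance `< i` of `v` has a number of neighbors different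
from `d`, then the color of `v` after `i` iterations violates the invariant. -/
lemma not_wlReg_of_walk {W : Type*} [Fintype W] {G : SimpleGraph W} {d : ℕ}
    {v u : W} (p : G.Walk v u)
    (hu : Multiset.card ((G.neighborSet u).toFinite.toFinset.val) ≠ d) :
    ∀ i : ℕ, p.length < i → ¬ WLReg d i (wlColor G i v) := by
  induction p with
  | nil =>
    intro i hi hreg
    obtain ⟨i, rfl⟩ : ∃ j, i = j + 1 := ⟨i - 1, by omega⟩
    exact hu (by simpa [wlColor] using hreg.1)
  | @cons a b c hab q ih =>
    intro i hi hreg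
    obtain ⟨i, rfl⟩ : ∃ j, i = j + 1 := ⟨i - 1, by omega⟩
    refine ih hu i (by simpa using hi) ?_
    refine hreg.2 _ ?_
    simp only [wlColor, Multiset.mem_map]
    exact ⟨b, by simpa [Set.Finite.mem_toFinset] using hab, rfl⟩

universe u

/-- Colors in `d`-regular graphs depend only on `d` and the iteration count. -/
lemma wlColor_regular_eq (d : ℕ) : ∀ (i : ℕ) {W W' : Type u} [Fintype W] [Fintype W']
    (G : SimpleGraph W) (G' : SimpleGraph W')
    (hG : ∀ v, Multiset.card ((G.neighborSet v).toFinite.toFinset.val) = d)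
    (hG' : ∀ v, Multiset.card ((G'.neighborSet v).toFinite.toFinset.val) = d)
    (v : W) (v' : W'), wlColor G i v = wlColor G' i v' := by
  intro i
  induction i with
  | zero => intros; rfl
  | succ i ih =>
    intro W W' _ _ G G' hG hG' v v'
    have h1 : ((G.neighborSet v).toFinite.toFinset.val).map (wlColor G i)
        = Multiset.replicate d (wlColor G' i v') := by
      rw [Multiset.eq_replicate]
      refine ⟨by simpa using hG v, fun x hx => ?_⟩
      obtain ⟨u, _, rfl⟩ := Multiset.mem_map.1 hx
      exact ih G G' hG hG' u v'
    have h2 : ((G'.neighborSet v').toFinite.toFinset.val).map (wlColor G' i)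
        = Multiset.replicate d (wlColor G' i v') := by
      rw [Multiset.eq_replicate]
      refine ⟨by simpa using hG' v', fun x hx => ?_⟩
      obtain ⟨u, _, rfl⟩ := Multiset.mem_map.1 hx
      exact ih (W := W') (W' := W') G' G' hG' hG' u v'
    show (_, _) = (_, _)
    rw [ih G G' hG hG' v v', h1, h2]

section Helpers

/-- Generic walk construction along a chain of adjacent vertices. -/
lemma walk_of_chain {α : Type*} {H : SimpleGraph α} (f : ℕ → α) :
    ∀ m : ℕ, (∀ i < m, H.Adj (f i) (f (i + 1))) →
      ∃ p : H.Walk (f 0) (f m), p.length = m := by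
  intro m
  induction m with
  | zero => exact fun _ => ⟨SimpleGraph.Walk.nil, rfl⟩
  | succ m ih =>
    intro h
    obtain ⟨p, hp⟩ := ih fun i hi => h i (by omega)
    exact ⟨p.concat (h m (by omega)), by simp [hp]⟩

/-- The multiset used in `wlColor` has size the `ncard` of the neighborhood. -/
lemma card_val_nbr {α : Type*} [Fintype α] (H : SimpleGraph α) (w : α) :
    Multiset.card ((H.neighborSet w).toFinite.toFinset.val) = (H.neighborSet w).ncard := by
  conv_rhs => rw [← Set.Finite.coe_toFinset (H.neighborSet w).toFinite]
  rw [Set.ncard_coe_finset]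
  rfl

/-- Transport of `wlColor` on induced subgraphs along an equality of vertex sets. -/
lemma wlColor_induce_congr {V : Type} [Fintype V] (G : SimpleGraph V) {S S' : Set V}
    (h : S = S') [iS : Fintype ↥S] [iS' : Fintype ↥S'] (T : ℕ) (v : V)
    (hv : v ∈ S) (hv' : v ∈ S') :
    wlColor (G.induce S) T ⟨v, hv⟩ = wlColor (G.induce S') T ⟨v, hv'⟩ := by
  subst h
  exact congrArg (fun inst => @wlColor _ inst (G.induce S) T ⟨v, hv⟩)
    (Subsingleton.elim _ _)

end Helpers

section Construction

/-- The vertex type: two cycles indexed by `Bool`, plus one extra vertex. -/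
abbrev Vtx (k : ℕ) : Type := (Bool × ZMod (2 * k + 1)) ⊕ Unit

instance (k : ℕ) : NeZero (2 * k + 1) := ⟨by omega⟩

noncomputable instance instFintypeSetVtx {k : ℕ} (S : Set (Vtx k)) : Fintype ↥S :=
  Fintype.ofFinite _

/-- Two disjoint odd cycles of length `2k+1` (for `k = 0` they degenerate to isolated
vertices), with an extra vertex attached to vertices `k` and `k+1` of the `true` one. -/
def Gk (k : ℕ) : SimpleGraph (Vtx k) where
  Adj u v :=
    match u, v with
    | .inl (b, x), .inl (b', y) => b = b' ∧ x ≠ y ∧ (x - y = 1 ∨ y - x = 1)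
    | .inl (b, x), .inr _ =>
        b = true ∧ (x = (k : ZMod (2 * k + 1)) ∨ x = (k : ZMod (2 * k + 1)) + 1)
    | .inr _, .inl (b, y) =>
        b = true ∧ (y = (k : ZMod (2 * k + 1)) ∨ y = (k : ZMod (2 * k + 1)) + 1)
    | .inr _, .inr _ => False
  symm := by
    constructor
    rintro (⟨b, x⟩ | ⟨⟩) (⟨b', y⟩ | ⟨⟩) h
    · exact ⟨h.1.symm, Ne.symm h.2.1, h.2.2.symm⟩
    · exact h
    · exact h
    · exact h.elim
  loopless := by
    constructor
    rintro (⟨b, x⟩ | ⟨⟩) h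
    · exact h.2.1 rfl
    · exact h

lemma Gk_adj_inl_inl {k : ℕ} {b b' : Bool} {x y : ZMod (2 * k + 1)} :
    (Gk k).Adj (.inl (b, x)) (.inl (b', y)) ↔
      b = b' ∧ x ≠ y ∧ (x - y = 1 ∨ y - x = 1) := Iff.rfl

lemma Gk_adj_inl_inr {k : ℕ} {b : Bool} {x : ZMod (2 * k + 1)} {u : Unit} :
    (Gk k).Adj (.inl (b, x)) (.inr u) ↔
      b = true ∧ (x = (k : ZMod (2 * k + 1)) ∨ x = (k : ZMod (2 * k + 1)) + 1) := Iff.rfl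

lemma Gk_adj_inr_inl {k : ℕ} {b : Bool} {y : ZMod (2 * k + 1)} {u : Unit} :
    (Gk k).Adj (.inr u) (.inl (b, y)) ↔
      b = true ∧ (y = (k : ZMod (2 * k + 1)) ∨ y = (k : ZMod (2 * k + 1)) + 1) := Iff.rfl

lemma Gk_adj_inr_inr {k : ℕ} {u u' : Unit} :
    (Gk k).Adj (.inr u) (.inr u') ↔ False := Iff.rfl

/-- Every element of `ZMod (2k+1)` is `±i` for some `i ≤ k`. -/
lemma zmod_reach (k : ℕ) (x : ZMod (2 * k + 1)) :
    ∃ i : ℕ, i ≤ k ∧ (x = (i : ZMod (2 * k + 1)) ∨ x = -(i : ZMod (2 * k + 1))) := by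
  have hval : x.val < 2 * k + 1 := ZMod.val_lt x
  by_cases h : x.val ≤ k
  · exact ⟨x.val, h, Or.inl (ZMod.natCast_rightInverse x).symm⟩
  · refine ⟨2 * k + 1 - x.val, by omega, Or.inr ?_⟩
    have h2 : ((x.val : ℕ) : ZMod (2 * k + 1)) = x := ZMod.natCast_rightInverse x
    have : ((2 * k + 1 - x.val : ℕ) : ZMod (2 * k + 1)) = -x := by
      rw [Nat.cast_sub hval.le, ZMod.natCast_self, h2]; ring
    rw [this, neg_neg]

lemma Gk_adj_cast {k : ℕ} (b : Bool) (j : ℕ) (hj : j + 1 < 2 * k + 1) :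
    (Gk k).Adj (.inl (b, (j : ZMod (2 * k + 1))))
      (.inl (b, ((j + 1 : ℕ) : ZMod (2 * k + 1)))) := by
  refine ⟨rfl, ?_, Or.inr ?_⟩
  · intro h
    have := congrArg ZMod.val h
    rw [ZMod.val_cast_of_lt (by omega), ZMod.val_cast_of_lt hj] at this
    omega
  · push_cast; ring

lemma Gk_adj_cast_neg {k : ℕ} (b : Bool) (j : ℕ) (hj : j + 1 < 2 * k + 1) :
    (Gk k).Adj (.inl (b, -(j : ZMod (2 * k + 1))))
      (.inl (b, -((j + 1 : ℕ) : ZMod (2 * k + 1)))) := by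
  refine ⟨rfl, ?_, Or.inl ?_⟩
  · intro h
    have h' : ((j : ZMod (2 * k + 1))) = ((j + 1 : ℕ) : ZMod (2 * k + 1)) := by
      have := congrArg Neg.neg h
      simpa using this
    have := congrArg ZMod.val h'
    rw [ZMod.val_cast_of_lt (by omega), ZMod.val_cast_of_lt hj] at this
    omega
  · push_cast; ring

/-- Within each cycle, every vertex is reachable from `0` within `k` hops. -/
lemma reach_cycle (k : ℕ) (b : Bool) (x : ZMod (2 * k + 1)) :
    ∃ p : (Gk k).Walk (.inl (b, 0)) (.inl (b, x)), p.length ≤ k := by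
  obtain ⟨i, hik, hx | hx⟩ := zmod_reach k x
  · obtain ⟨p, hp⟩ := walk_of_chain (H := Gk k)
      (fun j => .inl (b, (j : ZMod (2 * k + 1)))) i
      (fun j hj => Gk_adj_cast b j (by omega))
    refine ⟨p.copy (by simp) (by rw [hx]), by simpa [hp]⟩
  · obtain ⟨p, hp⟩ := walk_of_chain (H := Gk k)
      (fun j => .inl (b, -(j : ZMod (2 * k + 1)))) i
      (fun j hj => Gk_adj_cast_neg b j (by omega))
    refine ⟨p.copy (by simp) (by rw [hx]), by simpa [hp]⟩

/-- The extra vertex is reachable from `0` in the `true` cycle within `k+1` hops. -/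
lemma reach_z (k : ℕ) :
    ∃ p : (Gk k).Walk (.inl (true, 0)) (.inr ()), p.length ≤ k + 1 := by
  obtain ⟨p, hp⟩ := reach_cycle k true (k : ZMod (2 * k + 1))
  refine ⟨p.concat (Gk_adj_inl_inr.mpr ⟨rfl, Or.inl rfl⟩), ?_⟩
  rw [SimpleGraph.Walk.length_concat]
  omega

/-- Walks starting in the `false` cycle stay in the `false` cycle. -/
lemma walk_false_fiber {k : ℕ} : ∀ {u w : Vtx k} (_ : (Gk k).Walk u w)
    (x : ZMod (2 * k + 1)), u = .inl (false, x) → ∃ y, w = .inl (false, y) := by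
  intro u w p
  induction p with
  | nil => exact fun x hx => ⟨x, hx⟩
  | @cons a c w h q ih =>
    rintro x rfl
    cases c with
    | inl p =>
      obtain ⟨b', y⟩ := p
      have hb : false = b' := h.1
      exact ih y (by rw [← hb])
    | inr u => exact absurd h.1 (by simp)

end Construction

section Invariant

/-- Key arithmetic fact: an integer congruent to `k` or `k+1` mod `2k+1` is
`≤ -k` or `≥ k`. -/
lemma abs_k_le {k : ℕ} {j : ℤ}
    (h : (j : ZMod (2 * k + 1)) = (k : ℕ) ∨
         (j : ZMod (2 * k + 1)) = ((k : ℕ) : ZMod (2 * k + 1)) + 1) :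
    j ≤ -(k : ℤ) ∨ (k : ℤ) ≤ j := by
  by_contra hlt
  push_neg at hlt
  obtain ⟨hj1, hj2⟩ := hlt
  rcases h with h | h
  · have hmod : j ≡ (k : ℤ) [ZMOD ((2 * k + 1 : ℕ) : ℤ)] := by
      rw [← ZMod.intCast_eq_intCast_iff]
      push_cast
      exact_mod_cast h
    obtain ⟨c, hc⟩ := Int.ModEq.dvd hmod
    push_cast at hc
    rcases lt_trichotomy c 0 with h0 | h0 | h0
    · have : (2 * (k : ℤ) + 1) * c ≤ -(2 * k + 1) := by nlinarith
      linarith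
    · subst h0; simp at hc; omega
    · have : (2 * (k : ℤ) + 1) ≤ (2 * (k : ℤ) + 1) * c := by nlinarith
      linarith
  · have hmod : j ≡ (k : ℤ) + 1 [ZMOD ((2 * k + 1 : ℕ) : ℤ)] := by
      rw [← ZMod.intCast_eq_intCast_iff]
      push_cast
      exact_mod_cast h
    obtain ⟨c, hc⟩ := Int.ModEq.dvd hmod
    push_cast at hc
    rcases lt_trichotomy c 0 with h0 | h0 | h0
    · have : (2 * (k : ℤ) + 1) * c ≤ -(2 * k + 1) := by nlinarith
      linarith
    · subst h0; simp at hc; omega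
    · have : (2 * (k : ℤ) + 1) ≤ (2 * (k : ℤ) + 1) * c := by nlinarith
      linarith

/-- The confinement invariant for walks starting at vertex `0` of the `true` cycle:
after `ℓ` steps we are at a cycle vertex of the form `j` with `|j| ≤ ℓ`, and the
extra vertex can only be reached when `ℓ ≥ k + 1`. -/
def QT (k ℓ : ℕ) (u : Vtx k) : Prop :=
  (∃ j : ℤ, -(ℓ : ℤ) ≤ j ∧ j ≤ (ℓ : ℤ) ∧ u = .inl (true, (j : ZMod (2 * k + 1)))) ∨
    (u = .inr () ∧ k + 1 ≤ ℓ)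

lemma QT_mono {k ℓ ℓ' : ℕ} {u : Vtx k} (h : ℓ ≤ ℓ') (hu : QT k ℓ u) : QT k ℓ' u := by
  rcases hu with ⟨j, hj1, hj2, rfl⟩ | ⟨rfl, hk⟩
  · exact Or.inl ⟨j, by omega, by omega, rfl⟩
  · exact Or.inr ⟨rfl, by omega⟩

lemma QT_step {k ℓ : ℕ} {u w : Vtx k} (hu : QT k ℓ u) (h : (Gk k).Adj u w) :
    QT k (ℓ + 1) w := by
  rcases hu with ⟨j, hj1, hj2, rfl⟩ | ⟨rfl, hk⟩
  · cases w with
    | inl p =>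
      obtain ⟨b', y⟩ := p
      obtain ⟨hb, -, hxy | hxy⟩ := Gk_adj_inl_inl.mp h
      · refine Or.inl ⟨j - 1, by omega, by omega, ?_⟩
        subst hb
        have hy : y = (j : ZMod (2 * k + 1)) - 1 := by rw [← hxy]; ring
        rw [hy]; norm_cast
      · refine Or.inl ⟨j + 1, by omega, by omega, ?_⟩
        subst hb
        have hy : y = (j : ZMod (2 * k + 1)) + 1 := by rw [← hxy]; ring
        rw [hy]; norm_cast
    | inr uu =>
      obtain ⟨-, hx⟩ := Gk_adj_inl_inr.mp h
      have hk' := abs_k_le hx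
      refine Or.inr ⟨rfl, by omega⟩
  · cases w with
    | inl p =>
      obtain ⟨b', y⟩ := p
      obtain ⟨hb, hy | hy⟩ := Gk_adj_inr_inl.mp h
      · subst hb; subst hy
        exact Or.inl ⟨(k : ℤ), by omega, by omega, by norm_cast⟩
      · subst hb; subst hy
        refine Or.inl ⟨(k : ℤ) + 1, by omega, by omega, ?_⟩
        have : (((k : ℤ) + 1 : ℤ) : ZMod (2 * k + 1))
            = ((k : ℕ) : ZMod (2 * k + 1)) + 1 := by push_cast; ring
        rw [this]
    | inr uu => exact absurd h Gk_adj_inr_inr.mp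

lemma QT_walk {k : ℕ} : ∀ {u w : Vtx k} (p : (Gk k).Walk u w) (ℓ : ℕ),
    QT k ℓ u → QT k (ℓ + p.length) w := by
  intro u w p
  induction p with
  | nil => intro ℓ h; simpa using h
  | @cons a c w h q ih =>
    intro ℓ hu
    have := ih (ℓ + 1) (QT_step hu h)
    exact QT_mono (by simp [SimpleGraph.Walk.length_cons]; omega) this

end Invariant

section Khop

/-- The `b`-cycle as a vertex set. -/
def fib (k : ℕ) (b : Bool) : Set (Vtx k) := {u | ∃ x, u = .inl (b, x)}

/-- The `true` cycle together with the extra vertex. -/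
def fibz (k : ℕ) : Set (Vtx k) := fib k true ∪ {.inr ()}

lemma khop_false (k m : ℕ) (hm : k ≤ m) :
    khop (Gk k) {Sum.inl (false, 0)} m = fib k false := by
  ext u
  constructor
  · rintro ⟨v, hv, p, hp⟩
    rw [Set.mem_singleton_iff] at hv
    subst hv
    obtain ⟨y, rfl⟩ := walk_false_fiber p 0 rfl
    exact ⟨y, rfl⟩
  · rintro ⟨x, rfl⟩
    obtain ⟨p, hp⟩ := reach_cycle k false x
    exact ⟨_, rfl, p, hp.trans hm⟩

lemma khop_true_k (k : ℕ) :
    khop (Gk k) {Sum.inl (true, 0)} k = fib k true := by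
  ext u
  constructor
  · rintro ⟨v, hv, p, hp⟩
    rw [Set.mem_singleton_iff] at hv
    subst hv
    have h0 : QT k 0 (.inl (true, 0)) := Or.inl ⟨0, by omega, by omega, by norm_num⟩
    have hQ := QT_mono (show 0 + p.length ≤ k by omega) (QT_walk p 0 h0)
    rcases hQ with ⟨j, hj1, hj2, rfl⟩ | ⟨rfl, hk⟩
    · exact ⟨_, rfl⟩
    · omega
  · rintro ⟨x, rfl⟩
    obtain ⟨p, hp⟩ := reach_cycle k true x
    exact ⟨_, rfl, p, hp⟩

lemma khop_true_k1 (k : ℕ) :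
    khop (Gk k) {Sum.inl (true, 0)} (k + 1) = fibz k := by
  ext u
  constructor
  · rintro ⟨v, hv, p, hp⟩
    rw [Set.mem_singleton_iff] at hv
    subst hv
    have h0 : QT k 0 (.inl (true, 0)) := Or.inl ⟨0, by omega, by omega, by norm_num⟩
    have hQ := QT_mono (show 0 + p.length ≤ k + 1 by omega) (QT_walk p 0 h0)
    rcases hQ with ⟨j, hj1, hj2, rfl⟩ | ⟨rfl, hk⟩
    · exact Or.inl ⟨_, rfl⟩
    · exact Or.inr rfl
  · rintro (⟨x, rfl⟩ | h)
    · obtain ⟨p, hp⟩ := reach_cycle k true x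
      exact ⟨_, rfl, p, by omega⟩
    · rw [Set.mem_singleton_iff] at h
      subst h
      obtain ⟨p, hp⟩ := reach_z k
      exact ⟨_, rfl, p, hp⟩

end Khop

section Neighbors

lemma zmod_one_ne_zero {k : ℕ} (hk : k ≠ 0) : (1 : ZMod (2 * k + 1)) ≠ 0 := by
  have : ((1 : ℕ) : ZMod (2 * k + 1)) ≠ 0 := by
    rw [Ne, ZMod.natCast_eq_zero_iff]
    intro h
    have := Nat.le_of_dvd (by omega) h
    omega
  simpa using this

lemma zmod_two_ne_zero {k : ℕ} (hk : k ≠ 0) : (2 : ZMod (2 * k + 1)) ≠ 0 := by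
  have : ((2 : ℕ) : ZMod (2 * k + 1)) ≠ 0 := by
    rw [Ne, ZMod.natCast_eq_zero_iff]
    intro h
    have := Nat.le_of_dvd (by omega) h
    omega
  simpa using this

lemma zmod_succ_ne {k : ℕ} (hk : k ≠ 0) (x : ZMod (2 * k + 1)) : x ≠ x + 1 := by
  intro h
  have : (1 : ZMod (2 * k + 1)) = 0 := by linear_combination -h
  exact zmod_one_ne_zero hk this

lemma zmod_pred_ne {k : ℕ} (hk : k ≠ 0) (x : ZMod (2 * k + 1)) : x ≠ x - 1 := by
  intro h
  have : (1 : ZMod (2 * k + 1)) = 0 := by linear_combination h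
  exact zmod_one_ne_zero hk this

lemma zmod_succ_ne_pred {k : ℕ} (hk : k ≠ 0) (x : ZMod (2 * k + 1)) : x + 1 ≠ x - 1 := by
  intro h
  have : (2 : ZMod (2 * k + 1)) = 0 := by linear_combination h
  exact zmod_two_ne_zero hk this

lemma zmod_k0_eq {k : ℕ} (h : k = 0) (x y : ZMod (2 * k + 1)) : x = y := by
  subst h
  have hx := ZMod.val_lt x
  have hy := ZMod.val_lt y
  rw [← ZMod.natCast_rightInverse x, ← ZMod.natCast_rightInverse y]
  congr 1
  omega

/-- Inside either cycle, every vertex of the induced subgraph has `2` neighbors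
(resp. `0` in the degenerate case `k = 0`). -/
lemma nbr_fib (k : ℕ) (b : Bool) (w : ↥(fib k b)) :
    (((Gk k).induce (fib k b)).neighborSet w).ncard = if k = 0 then 0 else 2 := by
  obtain ⟨w, hw⟩ := w
  obtain ⟨x, rfl⟩ := hw
  by_cases hk : k = 0
  · subst hk
    rw [if_pos rfl]
    have hset : ((Gk 0).induce (fib 0 b)).neighborSet ⟨.inl (b, x), ⟨x, rfl⟩⟩ = ∅ := by
      ext ⟨u, hu⟩
      obtain ⟨y, rfl⟩ := hu
      simp only [SimpleGraph.mem_neighborSet, Set.mem_empty_iff_false, iff_false]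
      intro h
      exact (Gk_adj_inl_inl.mp h).2.1 (zmod_k0_eq rfl x y)
    rw [hset, Set.ncard_empty]
  · rw [if_neg hk]
    have hset : ((Gk k).induce (fib k b)).neighborSet ⟨.inl (b, x), ⟨x, rfl⟩⟩ =
        {⟨.inl (b, x + 1), ⟨x + 1, rfl⟩⟩, ⟨.inl (b, x - 1), ⟨x - 1, rfl⟩⟩} := by
      ext ⟨u, hu⟩
      obtain ⟨y, hy⟩ := hu
      subst hy
      simp only [SimpleGraph.mem_neighborSet, Set.mem_insert_iff, Set.mem_singleton_iff]
      constructor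
      · intro h
        obtain ⟨-, hne, hd | hd⟩ := Gk_adj_inl_inl.mp h
        · exact Or.inr (Subtype.ext (by rw [show y = x - 1 from by linear_combination -hd]))
        · exact Or.inl (Subtype.ext (by rw [show y = x + 1 from by linear_combination hd]))
      · rintro (h | h) <;> rw [h]
        · exact Gk_adj_inl_inl.mpr ⟨rfl, zmod_succ_ne hk x, Or.inr (by ring)⟩
        · exact Gk_adj_inl_inl.mpr ⟨rfl, zmod_pred_ne hk x, Or.inl (by ring)⟩
    rw [hset]
    refine Set.ncard_pair fun h => zmod_succ_ne_pred hk x ?_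
    simpa using congrArg Subtype.val h

/-- In the augmented `true` cycle, the vertex `k` (at distance `k` from `0`) has a
number of neighbors different from that in the plain cycle. -/
lemma nbr_fibz_bad (k : ℕ) :
    (((Gk k).induce (fibz k)).neighborSet
        ⟨.inl (true, ((k : ℕ) : ZMod (2 * k + 1))), Or.inl ⟨_, rfl⟩⟩).ncard =
      if k = 0 then 1 else 3 := by
  set x : ZMod (2 * k + 1) := ((k : ℕ) : ZMod (2 * k + 1)) with hx
  have hzadj : (Gk k).Adj (.inl (true, x)) (.inr ()) :=
    Gk_adj_inl_inr.mpr ⟨rfl, Or.inl rfl⟩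
  by_cases hk : k = 0
  · subst hk
    rw [if_pos rfl]
    have hset : ((Gk 0).induce (fibz 0)).neighborSet ⟨.inl (true, x), Or.inl ⟨_, rfl⟩⟩ =
        {⟨.inr (), Or.inr rfl⟩} := by
      ext ⟨u, hu⟩
      simp only [SimpleGraph.mem_neighborSet, Set.mem_singleton_iff]
      constructor
      · intro h
        rcases hu with ⟨y, hy⟩ | hu
        · subst hy
          exact absurd (zmod_k0_eq rfl x y) (Gk_adj_inl_inl.mp h).2.1
        · rw [Set.mem_singleton_iff] at hu
          exact Subtype.ext hu
      · intro h
        rw [h]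
        exact hzadj
    rw [hset, Set.ncard_singleton]
  · rw [if_neg hk]
    have hset : ((Gk k).induce (fibz k)).neighborSet ⟨.inl (true, x), Or.inl ⟨_, rfl⟩⟩ =
        {⟨.inr (), Or.inr rfl⟩, ⟨.inl (true, x + 1), Or.inl ⟨x + 1, rfl⟩⟩,
         ⟨.inl (true, x - 1), Or.inl ⟨x - 1, rfl⟩⟩} := by
      ext ⟨u, hu⟩
      simp only [SimpleGraph.mem_neighborSet, Set.mem_insert_iff, Set.mem_singleton_iff]
      constructor
      · intro h
        rcases hu with ⟨y, hy⟩ | hu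
        · subst hy
          obtain ⟨-, hne, hd | hd⟩ := Gk_adj_inl_inl.mp h
          · exact Or.inr (Or.inr (Subtype.ext
              (by rw [show y = x - 1 from by linear_combination -hd])))
          · exact Or.inr (Or.inl (Subtype.ext
              (by rw [show y = x + 1 from by linear_combination hd])))
        · rw [Set.mem_singleton_iff] at hu
          exact Or.inl (Subtype.ext hu)
      · rintro (h | h | h) <;> rw [h]
        · exact hzadj
        · exact Gk_adj_inl_inl.mpr ⟨rfl, zmod_succ_ne hk x, Or.inr (by ring)⟩
        · exact Gk_adj_inl_inl.mpr ⟨rfl, zmod_pred_ne hk x, Or.inl (by ring)⟩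
    rw [hset]
    rw [Set.ncard_insert_of_notMem, Set.ncard_pair]
    · intro h
      exact zmod_succ_ne_pred hk x (by simpa using congrArg Subtype.val h)
    · rintro (h | h) <;> simpa using congrArg Subtype.val h

/-- A walk of length `k` from vertex `0` to vertex `k` inside the induced augmented
cycle. -/
lemma walk_fibz (k : ℕ) :
    ∃ p : ((Gk k).induce (fibz k)).Walk ⟨.inl (true, 0), Or.inl ⟨0, rfl⟩⟩
      ⟨.inl (true, ((k : ℕ) : ZMod (2 * k + 1))), Or.inl ⟨_, rfl⟩⟩, p.length = k := by
  obtain ⟨p, hp⟩ := walk_of_chain (H := (Gk k).induce (fibz k))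
    (f := fun j => ⟨.inl (true, (j : ZMod (2 * k + 1))), Or.inl ⟨_, rfl⟩⟩) k
    (fun j hj => Gk_adj_cast true j (by omega))
  exact ⟨p.copy (by simp) rfl, by simp [hp]⟩

end Neighbors

section Assembly

lemma WLS_singleton {V : Type} [Fintype V] (G : SimpleGraph V) (k T : ℕ) (v : V) :
    WLS G k T {v} =
      (letI : Fintype ↥(khop G (↑({v} : Finset V)) k) := Fintype.ofFinite _
       {wlColor (G.induce (khop G (↑({v} : Finset V)) k)) T
         ⟨v, subset_khop G _ k (Finset.mem_coe.mpr (Finset.mem_singleton_self v))⟩}) :=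
  rfl

end Assembly

/-- Non-equivalence of `WLS^{k+1}` colorings of two subgraphs does not imply
non-equivalence of their `WLS^k` colorings: for every `k < T` there exist a finite
simple graph and two subgraphs whose color multisets are distinguished by `WLS^{k+1}`
but not by `WLS^k`. -/
theorem wls_succ_ne_not_imp_ne : ∀ k T : ℕ, k < T →
    ∃ (V : Type) (fV : Fintype V) (G : SimpleGraph V) (V1 V2 : Finset V),
      @WLS V fV G (k + 1) T V1 ≠ @WLS V fV G (k + 1) T V2 ∧
      @WLS V fV G k T V1 = @WLS V fV G k T V2 := by
  intro k T hkT
  refine ⟨Vtx k, inferInstance, Gk k, {Sum.inl (false, 0)}, {Sum.inl (true, 0)}, ?_, ?_⟩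
  · -- `WLS^{k+1}` distinguishes the two subgraphs
    have hF1 : khop (Gk k) (↑({Sum.inl (false, 0)} : Finset (Vtx k))) (k + 1)
        = fib k false := by
      rw [Finset.coe_singleton]; exact khop_false k (k + 1) (by omega)
    have hF2 : khop (Gk k) (↑({Sum.inl (true, 0)} : Finset (Vtx k))) (k + 1)
        = fibz k := by
      rw [Finset.coe_singleton]; exact khop_true_k1 k
    rw [WLS_singleton, WLS_singleton]
    intro hEq
    rw [Multiset.singleton_inj] at hEq
    rw [wlColor_induce_congr (Gk k) hF1 T _ _ ⟨0, rfl⟩,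
        wlColor_induce_congr (Gk k) hF2 T _ _ (Or.inl ⟨0, rfl⟩)] at hEq
    have hreg : WLReg (if k = 0 then 0 else 2) T
        (wlColor ((Gk k).induce (fib k false)) T ⟨Sum.inl (false, 0), ⟨0, rfl⟩⟩) :=
      wlReg_of_regular (fun w => by rw [card_val_nbr]; exact nbr_fib k false w) T _
    rw [hEq] at hreg
    obtain ⟨p, hp⟩ := walk_fibz k
    exact not_wlReg_of_walk p
      (by rw [card_val_nbr, nbr_fibz_bad]; split_ifs <;> omega) T
      (by rw [hp]; exact hkT) hreg
  · -- `WLS^k` does not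
    have hK1 : khop (Gk k) (↑({Sum.inl (false, 0)} : Finset (Vtx k))) k
        = fib k false := by
      rw [Finset.coe_singleton]; exact khop_false k k le_rfl
    have hK2 : khop (Gk k) (↑({Sum.inl (true, 0)} : Finset (Vtx k))) k
        = fib k true := by
      rw [Finset.coe_singleton]; exact khop_true_k k
    rw [WLS_singleton, WLS_singleton]
    rw [wlColor_induce_congr (Gk k) hK1 T _ _ ⟨0, rfl⟩,
        wlColor_induce_congr (Gk k) hK2 T _ _ ⟨0, rfl⟩]
    exact congrArg (fun c => ({c} : Multiset (WLColor T)))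
      (wlColor_regular_eq (if k = 0 then 0 else 2) T _ _
        (fun w => by rw [card_val_nbr]; exact nbr_fib k false w)
        (fun w => by rw [card_val_nbr]; exact nbr_fib k true w) _ _)
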